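/- Let A be a De Morgan poset and G a partial semi-tense operator on A with domain dom G. Then for every b ∈ dom G and every nonempty proper down-set D of A, κ_D(G(b)) = ⨅{ κ_E(b) : E a nonempty proper down-set with D R_G E }, the infimum taken in M₂ (viewed as a complete lattice). -/

import Mathlib

/-!
Every `E` with `D R_G E` gives `κ_D(G b) ≤ κ_E(b)` by definition of `R_G`, so only the reverse
inequality needs work, and since `M₂ = Bool × Bool` it can be checked one coordinate at a time.
For the first coordinate one needs an `R_G`-successor `E` of `D` containing `b` when `G b ∈ D`:
the down-set generated by the elements `x` with `G x ∈ D` and `x'` with `(G x)' ∈ D` works,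
axiom (P4) being what makes it an `R_G`-successor. For the second coordinate one needs one
avoiding `b'` when `(G b)' ∉ D`: the largest down-set all of whose elements `x` in `dom G`
(resp. `x'` with `x ∈ dom G`) satisfy `G x ∈ D` (resp. `(G x)' ∈ D`).
-/

/-- A down-set of a poset. -/
def IsDownSet {A : Type*} [PartialOrder A] (D : Set A) : Prop :=
  ∀ ⦃x y : A⦄, x ≤ y → y ∈ D → x ∈ D

/-- A nonempty proper down-set of a poset. -/
def IsProperDownSet {A : Type*} [PartialOrder A] (D : Set A) : Prop :=
  D.Nonempty ∧ D ≠ Set.univ ∧ IsDownSet D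

open Classical in
/-- `hD D a = false` iff `a ∈ D`. -/
noncomputable def hD {A : Type*} (D : Set A) (a : A) : Bool :=
  if a ∈ D then false else true

/-- `κ_D(a) = (h_D(a), h_D^∂(a))` where `h_D^∂(a) = ¬ h_D(a')`. -/
noncomputable def kappa {A : Type*} (neg : A → A) (D : Set A) (a : A) :
    Bool × Bool := (hD D a, ! hD D (neg a))

/-- The negation of the four-element De Morgan poset `M₂`: `(a,b)' = (¬b, ¬a)`. -/
def negM2 (m : Bool × Bool) : Bool × Bool := (! m.2, ! m.1)

/-- The relation `R_G` on down-sets: `D R_G E` iff `κ_D(G x) ≤ κ_E(x)` for all `x ∈ dom G`. -/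
def RG {A : Type*} (neg : A → A) (domG : Set A) (G : A → A) (D E : Set A) : Prop :=
  ∀ x ∈ domG, kappa neg D (G x) ≤ kappa neg E x

theorem Prod.sInf_le_of_fst_le_of_snd_le {α β : Type*} [CompleteLattice α] [CompleteLattice β]
    {S : Set (α × β)} {m s t : α × β} (hs : s ∈ S) (ht : t ∈ S) (h₁ : s.1 ≤ m.1)
    (h₂ : t.2 ≤ m.2) : sInf S ≤ m :=
  ⟨(sInf_le hs).1.trans h₁, (sInf_le ht).2.trans h₂⟩

theorem Bool.not_le_not_iff {a b : Bool} : (!a) ≤ !b ↔ b ≤ a := by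
  cases a <;> cases b <;> decide

theorem neg_le_neg_iff_of_antitone {A : Type*} [Preorder A] {neg : A → A} (hanti : Antitone neg)
    (hinv : Function.Involutive neg) {a b : A} : neg a ≤ neg b ↔ b ≤ a :=
  ⟨fun h => hinv a ▸ hinv b ▸ hanti h, fun h => hanti h⟩

section DeMorganPoset

variable {A : Type*} [PartialOrder A] [BoundedOrder A] {neg : A → A}

theorem neg_bot_of_antitone (hanti : Antitone neg) (hinv : Function.Involutive neg) :
    neg ⊥ = ⊤ :=
  top_le_iff.1 (hinv ⊤ ▸ hanti bot_le)

theorem neg_top_of_antitone (hanti : Antitone neg) (hinv : Function.Involutive neg) :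
    neg ⊤ = ⊥ := by
  rw [← neg_bot_of_antitone hanti hinv, hinv]

theorem IsProperDownSet.bot_mem {D : Set A} (hD : IsProperDownSet D) : ⊥ ∈ D :=
  let ⟨_, ha⟩ := hD.1
  hD.2.2 bot_le ha

theorem IsProperDownSet.top_notMem {D : Set A} (hD : IsProperDownSet D) : ⊤ ∉ D :=
  fun h => hD.2.1 (Set.eq_univ_of_forall fun _ => hD.2.2 le_top h)

theorem isProperDownSet_of_bot_mem_of_top_notMem {E : Set A} (hE : IsDownSet E) (hbot : ⊥ ∈ E)
    (htop : ⊤ ∉ E) : IsProperDownSet E :=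
  ⟨⟨⊥, hbot⟩, fun h => htop (h ▸ Set.mem_univ ⊤), hE⟩

end DeMorganPoset

section Kappa

variable {A : Type*} {neg : A → A}

theorem hD_le_hD_iff {D E : Set A} {a c : A} : hD E a ≤ hD D c ↔ (c ∈ D → a ∈ E) := by
  by_cases ha : a ∈ E <;> by_cases hc : c ∈ D <;> simp [hD, ha, hc]

theorem kappa_le_kappa_iff {D E : Set A} {a c : A} :
    kappa neg D c ≤ kappa neg E a ↔ (a ∈ E → c ∈ D) ∧ (neg c ∈ D → neg a ∈ E) := by
  simp only [kappa, Prod.mk_le_mk, Bool.not_le_not_iff, hD_le_hD_iff]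

theorem rg_iff {domG : Set A} {G : A → A} {D E : Set A} :
    RG neg domG G D E ↔ ∀ x ∈ domG, (x ∈ E → G x ∈ D) ∧ (neg (G x) ∈ D → neg x ∈ E) := by
  simp only [RG, kappa_le_kappa_iff]

end Kappa

/-- (P1), (P2) and (P4) of a partial semi-tense operator. -/
structure IsPartialSemiTense {A : Type*} [PartialOrder A] [BoundedOrder A] (neg : A → A)
    (domG : Set A) (G : A → A) : Prop where
  bot_mem : ⊥ ∈ domG
  top_mem : ⊤ ∈ domG
  map_bot : G ⊥ = ⊥
  map_top : G ⊤ = ⊤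
  monotoneOn : MonotoneOn G domG
  le_neg_map_neg : ∀ ⦃x y : A⦄, x ≤ y → x ∈ domG → neg y ∈ domG → G x ≤ neg (G (neg y))

namespace IsPartialSemiTense

variable {A : Type*} [PartialOrder A] {neg : A → A} {domG : Set A} {G : A → A}

def fstWitness (neg : A → A) (domG : Set A) (G : A → A) (D : Set A) : Set A :=
  {a | ∃ x ∈ domG, (a ≤ x ∧ G x ∈ D) ∨ (a ≤ neg x ∧ neg (G x) ∈ D)}

def sndWitness (neg : A → A) (domG : Set A) (G : A → A) (D : Set A) : Set A :=
  {a | ∀ x ∈ domG, (x ≤ a → G x ∈ D) ∧ (neg x ≤ a → neg (G x) ∈ D)}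

theorem kappa_fstWitness_fst_le {D : Set A} {b : A} (hb : b ∈ domG) :
    (kappa neg (fstWitness neg domG G D) b).1 ≤ (kappa neg D (G b)).1 :=
  hD_le_hD_iff.2 fun hGb => ⟨b, hb, .inl ⟨le_rfl, hGb⟩⟩

theorem kappa_sndWitness_snd_le {D : Set A} {b : A} (hb : b ∈ domG) :
    (kappa neg (sndWitness neg domG G D) b).2 ≤ (kappa neg D (G b)).2 :=
  Bool.not_le_not_iff.2 <| hD_le_hD_iff.2 fun hnb => (hnb b hb).2 le_rfl

variable [BoundedOrder A]

theorem isProperDownSet_fstWitness (hanti : Antitone neg) (hinv : Function.Involutive neg)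
    (hG : IsPartialSemiTense neg domG G) {D : Set A} (hD : IsProperDownSet D) :
    IsProperDownSet (fstWitness neg domG G D) := by
  refine isProperDownSet_of_bot_mem_of_top_notMem ?_
    ⟨⊥, hG.bot_mem, .inl ⟨le_rfl, by rw [hG.map_bot]; exact hD.bot_mem⟩⟩ ?_
  · rintro u v huv ⟨x, hx, ⟨hvx, hGx⟩ | ⟨hvx, hGx⟩⟩
    exacts [⟨x, hx, .inl ⟨huv.trans hvx, hGx⟩⟩, ⟨x, hx, .inr ⟨huv.trans hvx, hGx⟩⟩]
  · rintro ⟨x, -, ⟨hx, hGx⟩ | ⟨hx, hGx⟩⟩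
    · rw [top_le_iff.1 hx, hG.map_top] at hGx
      exact hD.top_notMem hGx
    · have hx_bot : x = ⊥ := by
        rw [← hinv x, top_le_iff.1 hx, neg_top_of_antitone hanti hinv]
      rw [hx_bot, hG.map_bot, neg_bot_of_antitone hanti hinv] at hGx
      exact hD.top_notMem hGx

theorem rg_fstWitness (hinv : Function.Involutive neg) (hG : IsPartialSemiTense neg domG G)
    {D : Set A} (hD : IsProperDownSet D) : RG neg domG G D (fstWitness neg domG G D) := by
  refine rg_iff.2 fun x hx => ⟨?_, fun hGx => ⟨x, hx, .inr ⟨le_rfl, hGx⟩⟩⟩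
  rintro ⟨z, hz, ⟨hxz, hGz⟩ | ⟨hxz, hGz⟩⟩
  · exact hD.2.2 (hG.monotoneOn hx hz hxz) hGz
  · have hle := hG.le_neg_map_neg hxz hx ((hinv z).symm ▸ hz)
    rw [hinv] at hle
    exact hD.2.2 hle hGz

theorem isProperDownSet_sndWitness (hanti : Antitone neg) (hinv : Function.Involutive neg)
    (hG : IsPartialSemiTense neg domG G) {D : Set A} (hD : IsProperDownSet D) :
    IsProperDownSet (sndWitness neg domG G D) := by
  refine isProperDownSet_of_bot_mem_of_top_notMem
    (fun u v huv hv x hx => ⟨fun h => (hv x hx).1 (h.trans huv),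
      fun h => (hv x hx).2 (h.trans huv)⟩) (fun x _ => ⟨?_, ?_⟩) ?_
  · intro hx
    rw [le_bot_iff.1 hx, hG.map_bot]
    exact hD.bot_mem
  · intro hx
    have hx_top : x = ⊤ := by
      rw [← hinv x, le_bot_iff.1 hx, neg_bot_of_antitone hanti hinv]
    rw [hx_top, hG.map_top, neg_top_of_antitone hanti hinv]
    exact hD.bot_mem
  · intro htop
    have hGtop := (htop ⊤ hG.top_mem).1 le_rfl
    rw [hG.map_top] at hGtop
    exact hD.top_notMem hGtop

theorem rg_sndWitness (hanti : Antitone neg) (hinv : Function.Involutive neg)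
    (hG : IsPartialSemiTense neg domG G) {D : Set A} (hD : IsProperDownSet D) :
    RG neg domG G D (sndWitness neg domG G D) := by
  refine rg_iff.2 fun x hx => ⟨fun h => (h x hx).1 le_rfl, fun hGx z hz => ⟨?_, ?_⟩⟩
  · intro hzx
    have hle := hG.le_neg_map_neg hzx hz ((hinv x).symm ▸ hx)
    rw [hinv] at hle
    exact hD.2.2 hle hGx
  · intro hzx
    have hxz := (neg_le_neg_iff_of_antitone hanti hinv).1 hzx
    exact hD.2.2 (hanti (hG.monotoneOn hx hz hxz)) hGx

end IsPartialSemiTense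

open IsPartialSemiTense in
/-- Representation of a partial semi-tense operator `G`: for `b ∈ dom G` and a
nonempty proper down-set `D`, `κ_D(G(b)) = ⨅ {κ_E(b) : D R_G E}` in `M₂`. -/
theorem stmt_9 {A : Type*} [PartialOrder A] [BoundedOrder A]
    (neg : A → A)
    (hanti : ∀ a b : A, a ≤ b → neg b ≤ neg a)
    (hinv : ∀ a : A, neg (neg a) = a)
    (domG : Set A) (G : A → A)
    (hbot : (⊥ : A) ∈ domG) (htop : (⊤ : A) ∈ domG)
    (hG0 : G ⊥ = ⊥) (hG1 : G ⊤ = ⊤)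
    (hP2 : ∀ x ∈ domG, ∀ y ∈ domG, x ≤ y → G x ≤ G y)
    (hP4 : ∀ x y : A, x ≤ y → x ∈ domG → neg y ∈ domG → G x ≤ neg (G (neg y)))
    (b : A) (hb : b ∈ domG)
    (D : Set A) (hDp : IsProperDownSet D) :
    kappa neg D (G b) =
      sInf {m : Bool × Bool |
        ∃ E : Set A, IsProperDownSet E ∧ RG neg domG G D E ∧ m = kappa neg E b} := by
  have hanti' : Antitone neg := fun a b h => hanti a b h
  have hG : IsPartialSemiTense neg domG G :=
    ⟨hbot, htop, hG0, hG1, fun x hx y hy => hP2 x hx y hy, fun x y => hP4 x y⟩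
  refine le_antisymm (le_sInf ?_) ?_
  · rintro _ ⟨E, -, hDE, rfl⟩
    exact hDE b hb
  · exact Prod.sInf_le_of_fst_le_of_snd_le
      ⟨_, isProperDownSet_fstWitness hanti' hinv hG hDp, rg_fstWitness hinv hG hDp, rfl⟩
      ⟨_, isProperDownSet_sndWitness hanti' hinv hG hDp, rg_sndWitness hanti' hinv hG hDp, rfl⟩
      (kappa_fstWitness_fst_le hb) (kappa_sndWitness_snd_le hb)
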